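/- Let ρ : F₂ → U(2) be a group homomorphism into the 2×2 unitary group acting on ℂ² such that no nontrivial element ρ(g) has 1 as an eigenvalue and ℂ² contains no nonzero ρ(F₂)-invariant vector. Then there exists a cocycle G : F₂ → ℂ² for ρ that is unbounded on F₂ but bounded on every cyclic subgroup of F₂. Equivalently, the affine isometric action g·x = ρ(g)x + G(g) of F₂ on ℂ² ≅ ℝ⁴ has unbounded orbits, yet every single element of F₂ fixes a point of ℂ². -/

import Mathlib

open scoped BigOperators

abbrev F2 : Type := FreeGroup Bool

/-!
A bounded cocycle has a global fixed point: by uniform convexity the image of the cocycle lies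
in a smallest closed ball with a unique centre, and this centre is invariant under the affine
action `x ↦ ρ g x + G g`. For the cocycle of `F₂` with `G a = e₀` and `G b = 0`, such a point
would be fixed by `ρ b`, hence be `0`, and then `e₀ = G a = 0`. On the other hand each `g ≠ 1`
has a fixed point `x` because `1 - ρ g` is invertible; `x` is then fixed by every power of `g`,
so `‖G (g ^ n)‖ = ‖x - ρ (g ^ n) x‖ ≤ 2 ‖x‖`.
-/

open Bornology Metric Set Filter

section FarthestDist

variable {E : Type*} [NormedAddCommGroup E]

noncomputable def farthestDist (S : Set E) (x : E) : ℝ := ⨆ s : S, dist (s : E) x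

theorem dist_le_farthestDist {S : Set E} (hS : IsBounded S) {s : E} (hs : s ∈ S) (x : E) :
    dist s x ≤ farthestDist S x := by
  obtain ⟨C, hC⟩ := hS.subset_closedBall x
  exact le_ciSup (f := fun s : S => dist (s : E) x) ⟨C, by rintro _ ⟨t, rfl⟩; exact hC t.2⟩ ⟨s, hs⟩

theorem farthestDist_le {S : Set E} (hS : S.Nonempty) {x : E} {r : ℝ}
    (h : ∀ s ∈ S, dist s x ≤ r) : farthestDist S x ≤ r :=
  haveI := hS.to_subtype
  ciSup_le fun s => h s s.2

theorem lipschitzWith_farthestDist {S : Set E} (hS : IsBounded S) (hne : S.Nonempty) :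
    LipschitzWith 1 (farthestDist S) :=
  LipschitzWith.of_le_add fun x y => farthestDist_le hne fun s hs =>
    (dist_triangle s y x).trans
      (by rw [dist_comm y x]; gcongr; exact dist_le_farthestDist hS hs y)

theorem exists_forall_farthestDist_le [ProperSpace E] {S : Set E} (hS : IsBounded S)
    (hne : S.Nonempty) : ∃ c, ∀ y, farthestDist S c ≤ farthestDist S y := by
  obtain ⟨s, hs⟩ := hne
  refine (lipschitzWith_farthestDist hS ⟨s, hs⟩).continuous.exists_forall_le ?_
  refine tendsto_atTop_mono (fun x => ?_)
    (tendsto_atTop_add_const_right _ (-‖s‖) tendsto_norm_cocompact_atTop)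
  calc ‖x‖ + -‖s‖ ≤ dist s x := by rw [dist_comm, dist_eq_norm]; linarith [norm_sub_norm_le x s]
    _ ≤ farthestDist S x := dist_le_farthestDist hS hs x

end FarthestDist

theorem Bornology.IsBounded.exists_unique_center {E : Type*} [NormedAddCommGroup E]
    [NormedSpace ℝ E] [UniformConvexSpace E] [ProperSpace E] {S : Set E} (hS : IsBounded S)
    (hne : S.Nonempty) : ∃ c r, S ⊆ closedBall c r ∧ ∀ y, S ⊆ closedBall y r → y = c := by
  obtain ⟨c, hc⟩ := exists_forall_farthestDist_le hS hne
  set r := farthestDist S c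
  refine ⟨c, r, fun s hs => dist_le_farthestDist hS hs c, fun y hy => ?_⟩
  by_contra hyc
  -- uniform convexity: the midpoint of `y` and `c` is closer than `r - δ / 2` to every point of `S`
  obtain ⟨δ, hδ, hconv⟩ :=
    exists_forall_closed_ball_dist_add_le_two_mul_sub E (dist_pos.2 hyc) r
  set m : E := (2 : ℝ)⁻¹ • (y + c)
  have hm : farthestDist S m ≤ r - δ / 2 := farthestDist_le hne fun s hs => by
    have hys : ‖y - s‖ ≤ r := by rw [← dist_eq_norm, dist_comm]; exact hy hs
    have hcs : ‖c - s‖ ≤ r := by rw [← dist_eq_norm, dist_comm]; exact dist_le_farthestDist hS hs c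
    have hsum := hconv hys hcs (by rw [sub_sub_sub_cancel_right, dist_eq_norm])
    have hms : m - s = (2 : ℝ)⁻¹ • ((y - s) + (c - s)) := by module
    rw [dist_comm, dist_eq_norm, hms, norm_smul, Real.norm_of_nonneg (by norm_num)]
    linarith
  linarith [hc m]

section Cocycle

variable {Γ R E : Type*} [Group Γ] [Semiring R] [NormedAddCommGroup E] [Module R E]

def IsCocycle (ρ : Γ →* (E ≃ₗᵢ[R] E)) (G : Γ → E) : Prop :=
  ∀ g g', G (g * g') = G g + ρ g (G g')

namespace IsCocycle

variable {ρ : Γ →* (E ≃ₗᵢ[R] E)} {G : Γ → E}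

theorem map_one (hG : IsCocycle ρ G) : G 1 = 0 := by
  simpa using hG 1 1

theorem map_inv (hG : IsCocycle ρ G) (g : Γ) : G g⁻¹ = -ρ g⁻¹ (G g) := by
  rw [eq_neg_iff_add_eq_zero, ← hG, inv_mul_cancel, hG.map_one]

def stabilizer (hG : IsCocycle ρ G) (x : E) : Subgroup Γ where
  carrier := {g | ρ g x + G g = x}
  one_mem' := by simp [hG.map_one]
  mul_mem' {g h} hg hh := by
    simp only [mem_ofPred_eq, map_mul, LinearIsometryEquiv.coe_mul, Function.comp_apply] at *
    rw [hG, ← add_assoc, add_right_comm, ← map_add, hh, hg]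
  inv_mem' {g} hg := by
    simp only [mem_ofPred_eq] at *
    rw [hG.map_inv, ← map_neg, ← map_add, ← sub_eq_add_neg, (eq_sub_of_add_eq hg).symm]
    simp

theorem exists_forall_fixed_of_isBounded [NormedSpace ℝ E] [UniformConvexSpace E] [ProperSpace E]
    (hG : IsCocycle ρ G) (hb : IsBounded (range G)) : ∃ x, ∀ g, ρ g x + G g = x := by
  obtain ⟨c, r, hcr, hc⟩ := hb.exists_unique_center (range_nonempty G)
  refine ⟨c, fun g => hc _ ?_⟩
  rintro _ ⟨h, rfl⟩
  rw [← mul_inv_cancel_left g h, hG, mem_closedBall, dist_eq_norm, add_comm (ρ g c),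
    add_sub_add_left_eq_sub, ← map_sub, LinearIsometryEquiv.norm_map, ← dist_eq_norm]
  exact hcr ⟨_, rfl⟩

end IsCocycle

theorem FreeGroup.exists_isCocycle {α R E : Type*} [Ring R] [NormedAddCommGroup E] [Module R E]
    (ρ : FreeGroup α →* (E ≃ₗᵢ[R] E)) (t : α → E) :
    ∃ G, IsCocycle ρ G ∧ ∀ a, G (FreeGroup.of a) = t a := by
  let φ : FreeGroup α →* (E ≃ᵃ[R] E) := FreeGroup.lift fun a =>
    AffineEquiv.constVAdd R E (t a) * (ρ (FreeGroup.of a)).toLinearEquiv.toAffineEquiv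
  let toLinearEquiv : (E ≃ₗᵢ[R] E) →* (E ≃ₗ[R] E) :=
    { toFun := LinearIsometryEquiv.toLinearEquiv, map_one' := rfl, map_mul' := fun _ _ => rfl }
  have hlin : AffineEquiv.linearHom.comp φ = toLinearEquiv.comp ρ :=
    FreeGroup.ext_hom _ _ fun a => by ext; rfl
  -- `G` is the orbit map of `0` under the affine action `φ`, whose linear parts are `ρ`
  refine ⟨fun g => φ g 0, fun g g' => ?_, fun a => by simp [φ]⟩
  have hρ : (φ g).linear = (ρ g).toLinearEquiv := DFunLike.congr_fun hlin g
  have hvadd := (φ g).map_vadd 0 (φ g' 0)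
  simp only [vadd_eq_add, add_zero] at hvadd
  show φ (g * g') 0 = φ g 0 + ρ g (φ g' 0)
  rw [_root_.map_mul, AffineEquiv.coe_mul, Function.comp_apply, hvadd, hρ, add_comm]
  rfl

end Cocycle

theorem LinearMap.exists_apply_add_eq_self {K V : Type*} [Field K] [AddCommGroup V] [Module K V]
    [FiniteDimensional K V] (f : V →ₗ[K] V) (hf : ∀ x, f x = x → x = 0) (v : V) :
    ∃ x, f x + v = x := by
  have hinj : Function.Injective (LinearMap.id - f : V →ₗ[K] V) := by
    rw [← LinearMap.ker_eq_bot, LinearMap.ker_eq_bot']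
    exact fun x hx => hf x (sub_eq_zero.1 hx).symm
  obtain ⟨x, hx⟩ := LinearMap.injective_iff_surjective.1 hinj v
  exact ⟨x, by rw [← hx]; simp⟩

theorem stmt17_general
    (ρ : F2 →* (EuclideanSpace ℂ (Fin 2) ≃ₗᵢ[ℂ] EuclideanSpace ℂ (Fin 2)))
    (h1 : ∀ g : F2, g ≠ 1 → ∀ v : EuclideanSpace ℂ (Fin 2), ρ g v = v → v = 0) :
    ∃ G : F2 → EuclideanSpace ℂ (Fin 2),
      (∀ g g' : F2, G (g * g') = G g + ρ g (G g')) ∧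
      (¬ ∃ C : ℝ, ∀ g : F2, ‖G g‖ ≤ C) ∧
      (∀ g : F2, ∃ C : ℝ, ∀ n : ℤ, ‖G (g ^ n)‖ ≤ C) ∧
      (∀ g : F2, ∃ x : EuclideanSpace ℂ (Fin 2), ρ g x + G g = x) := by
  obtain ⟨G, hG, hG_of⟩ := FreeGroup.exists_isCocycle ρ fun s =>
    if s then EuclideanSpace.single 0 1 else 0
  have hfix : ∀ g, ∃ x, ρ g x + G g = x := by
    intro g
    rcases eq_or_ne g 1 with rfl | hg
    · exact ⟨0, by simp [hG.map_one]⟩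
    · exact (ρ g).toLinearEquiv.toLinearMap.exists_apply_add_eq_self (h1 g hg) (G g)
  refine ⟨G, hG, ?_, fun g => ?_, hfix⟩
  · rintro ⟨C, hC⟩
    obtain ⟨c, hc⟩ := hG.exists_forall_fixed_of_isBounded
      (isBounded_iff_forall_norm_le.2 ⟨C, forall_mem_range.2 hC⟩)
    have hc0 : c = 0 := h1 _ (FreeGroup.of_ne_one false) c (by simpa [hG_of] using hc (.of false))
    simpa [hc0, hG_of] using hc (.of true)
  · obtain ⟨x, hx⟩ := hfix g
    refine ⟨2 * ‖x‖, fun n => ?_⟩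
    have hxn : ρ (g ^ n) x + G (g ^ n) = x := (hG.stabilizer x).zpow_mem hx n
    calc ‖G (g ^ n)‖ = ‖x - ρ (g ^ n) x‖ := by rw [eq_sub_of_add_eq' hxn]
      _ ≤ ‖x‖ + ‖ρ (g ^ n) x‖ := norm_sub_le _ _
      _ = 2 * ‖x‖ := by rw [LinearIsometryEquiv.norm_map, two_mul]

/-- if ρ : F₂ → U(2) acting on ℂ² is such that no nontrivial ρ(g) has 1
as an eigenvalue and there is no nonzero ρ(F₂)-invariant vector, then there is a
cocycle G : F₂ → ℂ² that is unbounded on F₂ but bounded on every cyclic subgroup;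
equivalently, the affine isometric action x ↦ ρ(g)x + G(g) has unbounded orbits yet
every single element of F₂ fixes a point of ℂ². -/
theorem stmt17
    (ρ : F2 →* (EuclideanSpace ℂ (Fin 2) ≃ₗᵢ[ℂ] EuclideanSpace ℂ (Fin 2)))
    (h1 : ∀ g : F2, g ≠ 1 → ∀ v : EuclideanSpace ℂ (Fin 2), ρ g v = v → v = 0)
    (h2 : ∀ v : EuclideanSpace ℂ (Fin 2), (∀ g : F2, ρ g v = v) → v = 0) :
    ∃ G : F2 → EuclideanSpace ℂ (Fin 2),
      (∀ g g' : F2, G (g * g') = G g + ρ g (G g')) ∧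
      (¬ ∃ C : ℝ, ∀ g : F2, ‖G g‖ ≤ C) ∧
      (∀ g : F2, ∃ C : ℝ, ∀ n : ℤ, ‖G (g ^ n)‖ ≤ C) ∧
      (∀ g : F2, ∃ x : EuclideanSpace ℂ (Fin 2), ρ g x + G g = x) :=
  stmt17_general ρ h1
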